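/- arXiv:math/9412220 — 2 statements merged into one kernel-verified Lean document; each statement's English description precedes it below -/
import Mathlib

section
/- For a > 0 and real numbers γ, γ', γ'', ∫_{−∞}^{∞} 1/((a^2+(t−γ)^2)(a^2+(t−γ')^2)(a^2+(t−γ'')^2)) dt = 12πa · F₁(γ,γ',γ'') + (π/a)·(F₂(γ,γ',γ'') + F₂(γ',γ'',γ) + F₂(γ'',γ,γ')), where F₁(x,y,z) = 1/((4a^2+(x−y)^2)(4a^2+(y−z)^2)(4a^2+(z−x)^2)) and F₂(x,y,z) = 1/((4a^2+(x−y)^2)(4a^2+(y−z)^2)). -/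
open Real MeasureTheory Filter Topology


lemma lorentz_pos (a c t : ℝ) (ha : 0 < a) : 0 < a ^ 2 + (t - c) ^ 2 := by positivity

lemma lorentz_integrable (a c : ℝ) (ha : 0 < a) :
    Integrable (fun t : ℝ => 1 / (a ^ 2 + (t - c) ^ 2)) := by
  have h0 : Integrable (fun t : ℝ => (1 + (t / a) ^ 2)⁻¹) :=
    integrable_inv_one_add_sq.comp_div ha.ne'
  have h1 : Integrable (fun t : ℝ => (1 + ((t - c) / a) ^ 2)⁻¹) := h0.comp_sub_right c
  have h2 := h1.const_mul (a ^ 2)⁻¹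
  refine h2.congr (Eventually.of_forall fun t => ?_)
  have : a ^ 2 ≠ 0 := by positivity
  field_simp

lemma lorentz_integral (a c : ℝ) (ha : 0 < a) :
    ∫ t : ℝ, 1 / (a ^ 2 + (t - c) ^ 2) = π / a := by
  have step1 : ∫ t : ℝ, 1 / (a ^ 2 + (t - c) ^ 2) = ∫ t : ℝ, 1 / (a ^ 2 + t ^ 2) :=
    integral_sub_right_eq_self (fun t => 1 / (a ^ 2 + t ^ 2)) c
  have key : ∀ t : ℝ, 1 / (a ^ 2 + t ^ 2) = (a ^ 2)⁻¹ * (1 + (t / a) ^ 2)⁻¹ := by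
    intro t
    have : a ^ 2 ≠ 0 := by positivity
    field_simp
  rw [step1]
  simp_rw [key]
  rw [integral_const_mul, MeasureTheory.Measure.integral_comp_div (fun x : ℝ => (1 + x ^ 2)⁻¹) a,
    integral_univ_inv_one_add_sq, abs_of_pos ha, smul_eq_mul]
  field_simp



lemma ratio_tendsto (a c d : ℝ) (ha : 0 < a) (l : Filter ℝ)
    (hinv : Tendsto (fun t : ℝ => t⁻¹) l (𝓝 0)) (hne : ∀ᶠ t in l, t ≠ 0) :
    Tendsto (fun t => (a ^ 2 + (t - c) ^ 2) / (a ^ 2 + (t - d) ^ 2)) l (𝓝 1) := by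
  have key : ∀ e : ℝ, Tendsto (fun t : ℝ => a ^ 2 * (t⁻¹) ^ 2 + (1 - e * t⁻¹) ^ 2) l (𝓝 1) := by
    intro e
    have hc : Continuous (fun x : ℝ => a ^ 2 * x ^ 2 + (1 - e * x) ^ 2) := by continuity
    have := (hc.tendsto 0).comp hinv
    simpa [Function.comp_def] using this
  have hmain := (key c).div (key d) one_ne_zero
  rw [div_one] at hmain
  refine hmain.congr' ?_
  filter_upwards [hne] with t ht
  have h1 : a ^ 2 * (t⁻¹) ^ 2 + (1 - d * t⁻¹) ^ 2 ≠ 0 := by positivity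
  have h2 : (a ^ 2 + (t - d) ^ 2) ≠ 0 := by positivity
  rw [Pi.div_apply]
  field_simp

lemma log_diff_tendsto (a c d : ℝ) (ha : 0 < a) (l : Filter ℝ)
    (hinv : Tendsto (fun t : ℝ => t⁻¹) l (𝓝 0)) (hne : ∀ᶠ t in l, t ≠ 0) :
    Tendsto (fun t => Real.log (a ^ 2 + (t - c) ^ 2) - Real.log (a ^ 2 + (t - d) ^ 2)) l (𝓝 0) := by
  have h := ((Real.continuousAt_log one_ne_zero).tendsto).comp (ratio_tendsto a c d ha l hinv hne)
  rw [Real.log_one] at h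
  refine h.congr (fun t => ?_)
  have h1 : (a ^ 2 + (t - c) ^ 2) ≠ 0 := by positivity
  have h2 : (a ^ 2 + (t - d) ^ 2) ≠ 0 := by positivity
  simp [Function.comp, Real.log_div h1 h2]



set_option maxHeartbeats 1000000 in
lemma aux_integral (a c₁ c₂ c₃ A₁ A₂ A₃ B₁ B₂ B₃ : ℝ) (ha : 0 < a)
    (hA : A₁ + A₂ + A₃ = 0)
    (hdecomp : ∀ t : ℝ,
      1 / ((a ^ 2 + (t - c₁) ^ 2) * (a ^ 2 + (t - c₂) ^ 2) * (a ^ 2 + (t - c₃) ^ 2)) =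
        (A₁ * (t - c₁) + B₁) / (a ^ 2 + (t - c₁) ^ 2)
        + (A₂ * (t - c₂) + B₂) / (a ^ 2 + (t - c₂) ^ 2)
        + (A₃ * (t - c₃) + B₃) / (a ^ 2 + (t - c₃) ^ 2)) :
    ∫ t : ℝ, 1 / ((a ^ 2 + (t - c₁) ^ 2) * (a ^ 2 + (t - c₂) ^ 2) * (a ^ 2 + (t - c₃) ^ 2)) =
      (B₁ + B₂ + B₃) * (π / a) := by
  have hq : ∀ (c t : ℝ), 0 < a ^ 2 + (t - c) ^ 2 := fun c t => by positivity
  have hI₁ := lorentz_integrable a c₁ ha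
  have hI₂ := lorentz_integrable a c₂ ha
  have hI₃ := lorentz_integrable a c₃ ha
  -- integrability of f
  have hf : Integrable (fun t : ℝ =>
      1 / ((a ^ 2 + (t - c₁) ^ 2) * (a ^ 2 + (t - c₂) ^ 2) * (a ^ 2 + (t - c₃) ^ 2))) := by
    have hbnd := hI₁.const_mul ((a ^ 2 * a ^ 2)⁻¹)
    refine hbnd.mono' ?_ ?_
    · apply Continuous.aestronglyMeasurable
      refine continuous_const.div ?_ (fun t => by positivity)
      fun_prop
    · refine Eventually.of_forall fun t => ?_
      have h1 : 0 < a ^ 2 * a ^ 2 * (a ^ 2 + (t - c₁) ^ 2) := by positivity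
      have e2 : a ^ 2 ≤ a ^ 2 + (t - c₂) ^ 2 := le_add_of_nonneg_right (sq_nonneg _)
      have e3 : a ^ 2 ≤ a ^ 2 + (t - c₃) ^ 2 := le_add_of_nonneg_right (sq_nonneg _)
      have h4 : (a ^ 2 + (t - c₁) ^ 2) * (a ^ 2 * a ^ 2)
          ≤ (a ^ 2 + (t - c₁) ^ 2) * ((a ^ 2 + (t - c₂) ^ 2) * (a ^ 2 + (t - c₃) ^ 2)) :=
        mul_le_mul_of_nonneg_left
          (mul_le_mul e2 e3 (by positivity) (by positivity)) (hq c₁ t).le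
      have h2 : a ^ 2 * a ^ 2 * (a ^ 2 + (t - c₁) ^ 2)
          ≤ (a ^ 2 + (t - c₁) ^ 2) * (a ^ 2 + (t - c₂) ^ 2) * (a ^ 2 + (t - c₃) ^ 2) := by
        nlinarith [h4]
      have h0 : (0:ℝ) ≤ 1 / ((a ^ 2 + (t - c₁) ^ 2) * (a ^ 2 + (t - c₂) ^ 2)
          * (a ^ 2 + (t - c₃) ^ 2)) := by positivity
      rw [Real.norm_of_nonneg h0]
      calc 1 / ((a ^ 2 + (t - c₁) ^ 2) * (a ^ 2 + (t - c₂) ^ 2) * (a ^ 2 + (t - c₃) ^ 2))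
          ≤ 1 / (a ^ 2 * a ^ 2 * (a ^ 2 + (t - c₁) ^ 2)) := one_div_le_one_div_of_le h1 h2
        _ = (a ^ 2 * a ^ 2)⁻¹ * (1 / (a ^ 2 + (t - c₁) ^ 2)) := by
            rw [one_div, one_div, mul_inv]
  -- integrability of b
  have hb12 : Integrable (fun t : ℝ => B₁ * (1 / (a ^ 2 + (t - c₁) ^ 2))
      + B₂ * (1 / (a ^ 2 + (t - c₂) ^ 2))) := (hI₁.const_mul B₁).add (hI₂.const_mul B₂)
  have hb : Integrable (fun t : ℝ => B₁ * (1 / (a ^ 2 + (t - c₁) ^ 2))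
      + B₂ * (1 / (a ^ 2 + (t - c₂) ^ 2)) + B₃ * (1 / (a ^ 2 + (t - c₃) ^ 2))) :=
    hb12.add (hI₃.const_mul B₃)
  -- pointwise decomposition
  have hfhb : ∀ t : ℝ,
      1 / ((a ^ 2 + (t - c₁) ^ 2) * (a ^ 2 + (t - c₂) ^ 2) * (a ^ 2 + (t - c₃) ^ 2)) =
      (A₁ * ((t - c₁) / (a ^ 2 + (t - c₁) ^ 2)) + A₂ * ((t - c₂) / (a ^ 2 + (t - c₂) ^ 2))
        + A₃ * ((t - c₃) / (a ^ 2 + (t - c₃) ^ 2)))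
      + (B₁ * (1 / (a ^ 2 + (t - c₁) ^ 2)) + B₂ * (1 / (a ^ 2 + (t - c₂) ^ 2))
        + B₃ * (1 / (a ^ 2 + (t - c₃) ^ 2))) := by
    intro t
    rw [hdecomp t]
    ring
  have hh : Integrable (fun t : ℝ =>
      A₁ * ((t - c₁) / (a ^ 2 + (t - c₁) ^ 2)) + A₂ * ((t - c₂) / (a ^ 2 + (t - c₂) ^ 2))
        + A₃ * ((t - c₃) / (a ^ 2 + (t - c₃) ^ 2))) := by
    refine (hf.sub hb).congr (Eventually.of_forall fun t => ?_)
    simp only [Pi.sub_apply]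
    rw [hfhb t]; ring
  -- ∫ h = 0 via FTC
  have hH : ∫ t : ℝ, (A₁ * ((t - c₁) / (a ^ 2 + (t - c₁) ^ 2))
      + A₂ * ((t - c₂) / (a ^ 2 + (t - c₂) ^ 2))
      + A₃ * ((t - c₃) / (a ^ 2 + (t - c₃) ^ 2))) = 0 := by
    have hderiv : ∀ t : ℝ, HasDerivAt (fun t : ℝ => A₁ / 2 * Real.log (a ^ 2 + (t - c₁) ^ 2)
        + A₂ / 2 * Real.log (a ^ 2 + (t - c₂) ^ 2) + A₃ / 2 * Real.log (a ^ 2 + (t - c₃) ^ 2))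
        (A₁ * ((t - c₁) / (a ^ 2 + (t - c₁) ^ 2)) + A₂ * ((t - c₂) / (a ^ 2 + (t - c₂) ^ 2))
          + A₃ * ((t - c₃) / (a ^ 2 + (t - c₃) ^ 2))) t := by
      intro t
      have hd : ∀ c : ℝ, HasDerivAt (fun t => Real.log (a ^ 2 + (t - c) ^ 2))
          (2 * (t - c) / (a ^ 2 + (t - c) ^ 2)) t := by
        intro c
        have h1 : HasDerivAt (fun t : ℝ => a ^ 2 + (t - c) ^ 2) (2 * (t - c)) t := by
          have h2 : HasDerivAt (fun t : ℝ => (t - c) ^ 2) (2 * (t - c) ^ 1 * 1) t :=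
            ((hasDerivAt_id t).sub_const c).pow 2
          simpa using h2.const_add (a ^ 2)
        exact h1.log (hq c t).ne'
      have hcomb := (((hd c₁).const_mul (A₁ / 2)).add ((hd c₂).const_mul (A₂ / 2))).add
        ((hd c₃).const_mul (A₃ / 2))
      refine hcomb.congr_deriv ?_
      ring
    have hA₃ : A₃ = -A₁ - A₂ := by linarith
    have hlim : ∀ (l : Filter ℝ), Tendsto (fun t : ℝ => t⁻¹) l (𝓝 0) → (∀ᶠ t in l, t ≠ 0) →
        Tendsto (fun t : ℝ => A₁ / 2 * Real.log (a ^ 2 + (t - c₁) ^ 2)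
          + A₂ / 2 * Real.log (a ^ 2 + (t - c₂) ^ 2)
          + A₃ / 2 * Real.log (a ^ 2 + (t - c₃) ^ 2)) l (𝓝 0) := by
      intro l hinv hne
      have h1 := (log_diff_tendsto a c₁ c₃ ha l hinv hne).const_mul (A₁ / 2)
      have h2 := (log_diff_tendsto a c₂ c₃ ha l hinv hne).const_mul (A₂ / 2)
      have h3 := h1.add h2
      rw [mul_zero, mul_zero, add_zero] at h3
      refine h3.congr (fun t => ?_)
      rw [hA₃]; ring
    have hbotinv : Tendsto (fun t : ℝ => t⁻¹) atBot (𝓝 0) := by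
      have h := ((tendsto_inv_atTop_zero (𝕜 := ℝ)).comp tendsto_neg_atBot_atTop).neg
      rw [neg_zero] at h
      refine h.congr (fun t => ?_)
      simp only [Function.comp_apply]
      rw [inv_neg, neg_neg]
    have htop := hlim atTop tendsto_inv_atTop_zero (eventually_ne_atTop 0)
    have hbot := hlim atBot hbotinv (eventually_ne_atBot 0)
    have := integral_of_hasDerivAt_of_tendsto hderiv hh hbot htop
    simpa using this
  -- integral of b
  have e₁ : ∫ t : ℝ, B₁ * (1 / (a ^ 2 + (t - c₁) ^ 2)) = B₁ * (π / a) := by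
    rw [integral_const_mul, lorentz_integral a c₁ ha]
  have e₂ : ∫ t : ℝ, B₂ * (1 / (a ^ 2 + (t - c₂) ^ 2)) = B₂ * (π / a) := by
    rw [integral_const_mul, lorentz_integral a c₂ ha]
  have e₃ : ∫ t : ℝ, B₃ * (1 / (a ^ 2 + (t - c₃) ^ 2)) = B₃ * (π / a) := by
    rw [integral_const_mul, lorentz_integral a c₃ ha]
  have hbval : ∫ t : ℝ, (B₁ * (1 / (a ^ 2 + (t - c₁) ^ 2)) + B₂ * (1 / (a ^ 2 + (t - c₂) ^ 2))
      + B₃ * (1 / (a ^ 2 + (t - c₃) ^ 2))) = (B₁ + B₂ + B₃) * (π / a) := by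
    calc ∫ t : ℝ, (B₁ * (1 / (a ^ 2 + (t - c₁) ^ 2)) + B₂ * (1 / (a ^ 2 + (t - c₂) ^ 2))
          + B₃ * (1 / (a ^ 2 + (t - c₃) ^ 2)))
        = (∫ t : ℝ, (B₁ * (1 / (a ^ 2 + (t - c₁) ^ 2)) + B₂ * (1 / (a ^ 2 + (t - c₂) ^ 2))))
          + ∫ t : ℝ, B₃ * (1 / (a ^ 2 + (t - c₃) ^ 2)) := integral_add hb12 (hI₃.const_mul B₃)
      _ = ((∫ t : ℝ, B₁ * (1 / (a ^ 2 + (t - c₁) ^ 2)))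
          + ∫ t : ℝ, B₂ * (1 / (a ^ 2 + (t - c₂) ^ 2)))
          + ∫ t : ℝ, B₃ * (1 / (a ^ 2 + (t - c₃) ^ 2)) := by
          rw [integral_add (hI₁.const_mul B₁) (hI₂.const_mul B₂)]
      _ = (B₁ + B₂ + B₃) * (π / a) := by rw [e₁, e₂, e₃]; ring
  calc ∫ t : ℝ, 1 / ((a ^ 2 + (t - c₁) ^ 2) * (a ^ 2 + (t - c₂) ^ 2) * (a ^ 2 + (t - c₃) ^ 2))
      = ∫ t : ℝ, ((A₁ * ((t - c₁) / (a ^ 2 + (t - c₁) ^ 2))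
          + A₂ * ((t - c₂) / (a ^ 2 + (t - c₂) ^ 2))
          + A₃ * ((t - c₃) / (a ^ 2 + (t - c₃) ^ 2)))
        + (B₁ * (1 / (a ^ 2 + (t - c₁) ^ 2)) + B₂ * (1 / (a ^ 2 + (t - c₂) ^ 2))
          + B₃ * (1 / (a ^ 2 + (t - c₃) ^ 2)))) :=
        integral_congr_ae (Eventually.of_forall hfhb)
    _ = (∫ t : ℝ, (A₁ * ((t - c₁) / (a ^ 2 + (t - c₁) ^ 2))
          + A₂ * ((t - c₂) / (a ^ 2 + (t - c₂) ^ 2))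
          + A₃ * ((t - c₃) / (a ^ 2 + (t - c₃) ^ 2))))
        + ∫ t : ℝ, (B₁ * (1 / (a ^ 2 + (t - c₁) ^ 2)) + B₂ * (1 / (a ^ 2 + (t - c₂) ^ 2))
          + B₃ * (1 / (a ^ 2 + (t - c₃) ^ 2))) := integral_add hh hb
    _ = (B₁ + B₂ + B₃) * (π / a) := by rw [hH, hbval, zero_add]



lemma frac_combine (x y z c p q r : ℝ) (hc : c ≠ 0) (hp : p ≠ 0) (hq : q ≠ 0) (hr : r ≠ 0) :
    x / (c * p) + y / (c * q) + z / (c * r)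
      = (x * (q * r) + y * (p * r) + z * (p * q)) / (c * (p * q * r)) := by
  field_simp

set_option maxHeartbeats 1000000 in
lemma main_distinct (a γ γ' γ'' : ℝ) (ha : 0 < a) (h12 : γ ≠ γ') (h13 : γ ≠ γ'')
    (h23 : γ' ≠ γ'') :
    ∫ t : ℝ, 1 / ((a ^ 2 + (t - γ) ^ 2) * (a ^ 2 + (t - γ') ^ 2) * (a ^ 2 + (t - γ'') ^ 2)) =
      π / a * ((12 * a ^ 2 + (4 * a ^ 2 + (γ - γ') ^ 2) + (4 * a ^ 2 + (γ - γ'') ^ 2)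
          + (4 * a ^ 2 + (γ' - γ'') ^ 2)) /
        ((4 * a ^ 2 + (γ - γ') ^ 2) * (4 * a ^ 2 + (γ - γ'') ^ 2)
          * (4 * a ^ 2 + (γ' - γ'') ^ 2))) := by
  have hd12 : γ - γ' ≠ 0 := sub_ne_zero.mpr h12
  have hd13 : γ - γ'' ≠ 0 := sub_ne_zero.mpr h13
  have hd23 : γ' - γ'' ≠ 0 := sub_ne_zero.mpr h23
  have hU12 : (4 * a ^ 2 + (γ - γ') ^ 2) ≠ 0 := by positivity
  have hU13 : (4 * a ^ 2 + (γ - γ'') ^ 2) ≠ 0 := by positivity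
  have hU23 : (4 * a ^ 2 + (γ' - γ'') ^ 2) ≠ 0 := by positivity
  set U₁₂ : ℝ := 4 * a ^ 2 + (γ - γ') ^ 2 with hU₁₂
  set U₁₃ : ℝ := 4 * a ^ 2 + (γ - γ'') ^ 2 with hU₁₃
  set U₂₃ : ℝ := 4 * a ^ 2 + (γ' - γ'') ^ 2 with hU₂₃
  set D : ℝ := (γ - γ') * (γ - γ'') * (γ' - γ'') * (U₁₂ * U₁₃ * U₂₃) with hD
  have hDd : D = (γ - γ') * (γ - γ'') * (γ' - γ'') * (U₁₂ * U₁₃ * U₂₃) := hD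
  have hDne : D ≠ 0 := by
    rw [hD]
    exact mul_ne_zero (mul_ne_zero (mul_ne_zero hd12 hd13) hd23)
      (mul_ne_zero (mul_ne_zero hU12 hU13) hU23)
  set n₁ : ℝ := -2 * ((γ - γ') + (γ - γ'')) * (γ' - γ'') * U₂₃ with hn₁
  set m₁ : ℝ := ((γ - γ') * (γ - γ'') - 4 * a ^ 2) * (γ' - γ'') * U₂₃ with hm₁
  set n₂ : ℝ := -2 * ((γ' - γ) + (γ' - γ'')) * (-(γ - γ'')) * U₁₃ with hn₂
  set m₂ : ℝ := ((γ' - γ) * (γ' - γ'') - 4 * a ^ 2) * (-(γ - γ'')) * U₁₃ with hm₂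
  set n₃ : ℝ := -2 * ((γ'' - γ) + (γ'' - γ')) * (γ - γ') * U₁₂ with hn₃
  set m₃ : ℝ := ((γ'' - γ) * (γ'' - γ') - 4 * a ^ 2) * (γ - γ') * U₁₂ with hm₃
  have hA : n₁ / D + n₂ / D + n₃ / D = 0 := by
    rw [← add_div, ← add_div]
    have : n₁ + n₂ + n₃ = 0 := by rw [hn₁, hn₂, hn₃, hU₁₂, hU₁₃, hU₂₃]; ring
    rw [this, zero_div]
  have hdecomp : ∀ t : ℝ,
      1 / ((a ^ 2 + (t - γ) ^ 2) * (a ^ 2 + (t - γ') ^ 2) * (a ^ 2 + (t - γ'') ^ 2)) =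
        (n₁ / D * (t - γ) + m₁ / D) / (a ^ 2 + (t - γ) ^ 2)
        + (n₂ / D * (t - γ') + m₂ / D) / (a ^ 2 + (t - γ') ^ 2)
        + (n₃ / D * (t - γ'') + m₃ / D) / (a ^ 2 + (t - γ'') ^ 2) := by
    intro t
    have hq1 : (a ^ 2 + (t - γ) ^ 2) ≠ 0 := by positivity
    have hq2 : (a ^ 2 + (t - γ') ^ 2) ≠ 0 := by positivity
    have hq3 : (a ^ 2 + (t - γ'') ^ 2) ≠ 0 := by positivity
    have e₁ : (n₁ / D * (t - γ) + m₁ / D) / (a ^ 2 + (t - γ) ^ 2)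
        = (n₁ * (t - γ) + m₁) / (D * (a ^ 2 + (t - γ) ^ 2)) := by
      rw [div_mul_eq_mul_div, ← add_div, div_div]
    have e₂ : (n₂ / D * (t - γ') + m₂ / D) / (a ^ 2 + (t - γ') ^ 2)
        = (n₂ * (t - γ') + m₂) / (D * (a ^ 2 + (t - γ') ^ 2)) := by
      rw [div_mul_eq_mul_div, ← add_div, div_div]
    have e₃ : (n₃ / D * (t - γ'') + m₃ / D) / (a ^ 2 + (t - γ'') ^ 2)
        = (n₃ * (t - γ'') + m₃) / (D * (a ^ 2 + (t - γ'') ^ 2)) := by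
      rw [div_mul_eq_mul_div, ← add_div, div_div]
    rw [e₁, e₂, e₃, frac_combine _ _ _ _ _ _ _ hDne hq1 hq2 hq3]
    have key : (n₁ * (t - γ) + m₁) * ((a ^ 2 + (t - γ') ^ 2) * (a ^ 2 + (t - γ'') ^ 2))
        + (n₂ * (t - γ') + m₂) * ((a ^ 2 + (t - γ) ^ 2) * (a ^ 2 + (t - γ'') ^ 2))
        + (n₃ * (t - γ'') + m₃) * ((a ^ 2 + (t - γ) ^ 2) * (a ^ 2 + (t - γ') ^ 2)) = D := by
      rw [hn₁, hm₁, hn₂, hm₂, hn₃, hm₃, hD, hU₁₂, hU₁₃, hU₂₃]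
      ring
    rw [key]
    rw [eq_comm, div_eq_div_iff (by positivity) (by positivity)]
    ring
  have hint := aux_integral a γ γ' γ'' (n₁ / D) (n₂ / D) (n₃ / D) (m₁ / D) (m₂ / D) (m₃ / D)
    ha hA hdecomp
  rw [hint, ← add_div, ← add_div]
  have hmsum : m₁ + m₂ + m₃
      = ((γ - γ') * (γ - γ'') * (γ' - γ'')) * (12 * a ^ 2 + U₁₂ + U₁₃ + U₂₃) := by
    rw [hm₁, hm₂, hm₃, hU₁₂, hU₁₃, hU₂₃]; ring
  rw [hmsum, hD]
  rw [show (γ - γ') * (γ - γ'') * (γ' - γ'') * (U₁₂ * U₁₃ * U₂₃)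
      = ((γ - γ') * (γ - γ'') * (γ' - γ'')) * (U₁₂ * U₁₃ * U₂₃) from by ring,
    mul_div_mul_left _ _ (mul_ne_zero (mul_ne_zero hd12 hd13) hd23)]
  ring



noncomputable def Lfun (a c : ℝ) : ℝ × ℝ → ℝ := fun p =>
  ∫ t : ℝ, 1 / ((a ^ 2 + (t - c) ^ 2) * (a ^ 2 + (t - p.1) ^ 2) * (a ^ 2 + (t - p.2) ^ 2))

noncomputable def Rfun (a c : ℝ) : ℝ × ℝ → ℝ := fun p =>
  π / a * ((12 * a ^ 2 + (4 * a ^ 2 + (c - p.1) ^ 2) + (4 * a ^ 2 + (c - p.2) ^ 2)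
      + (4 * a ^ 2 + (p.1 - p.2) ^ 2)) /
    ((4 * a ^ 2 + (c - p.1) ^ 2) * (4 * a ^ 2 + (c - p.2) ^ 2)
      * (4 * a ^ 2 + (p.1 - p.2) ^ 2)))

lemma Lfun_continuous (a c : ℝ) (ha : 0 < a) : Continuous (Lfun a c) := by
  apply continuous_of_dominated (bound := fun t : ℝ => (a ^ 2 * a ^ 2)⁻¹ * (1 / (a ^ 2 + (t - c) ^ 2)))
  · intro p
    apply Continuous.aestronglyMeasurable
    exact continuous_const.div (by fun_prop) (fun t => by positivity)
  · intro p
    refine Eventually.of_forall fun t => ?_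
    have hq : ∀ (e s : ℝ), 0 < a ^ 2 + (s - e) ^ 2 := fun e s => by positivity
    have h1 : 0 < a ^ 2 * a ^ 2 * (a ^ 2 + (t - c) ^ 2) := by positivity
    have e2 : a ^ 2 ≤ a ^ 2 + (t - p.1) ^ 2 := le_add_of_nonneg_right (sq_nonneg _)
    have e3 : a ^ 2 ≤ a ^ 2 + (t - p.2) ^ 2 := le_add_of_nonneg_right (sq_nonneg _)
    have h4 : (a ^ 2 + (t - c) ^ 2) * (a ^ 2 * a ^ 2)
        ≤ (a ^ 2 + (t - c) ^ 2) * ((a ^ 2 + (t - p.1) ^ 2) * (a ^ 2 + (t - p.2) ^ 2)) :=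
      mul_le_mul_of_nonneg_left (mul_le_mul e2 e3 (by positivity) (by positivity)) (hq c t).le
    have h2 : a ^ 2 * a ^ 2 * (a ^ 2 + (t - c) ^ 2)
        ≤ (a ^ 2 + (t - c) ^ 2) * (a ^ 2 + (t - p.1) ^ 2) * (a ^ 2 + (t - p.2) ^ 2) := by
      nlinarith [h4]
    have h0 : (0:ℝ) ≤ 1 / ((a ^ 2 + (t - c) ^ 2) * (a ^ 2 + (t - p.1) ^ 2)
        * (a ^ 2 + (t - p.2) ^ 2)) := by positivity
    rw [Real.norm_of_nonneg h0]
    calc 1 / ((a ^ 2 + (t - c) ^ 2) * (a ^ 2 + (t - p.1) ^ 2) * (a ^ 2 + (t - p.2) ^ 2))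
        ≤ 1 / (a ^ 2 * a ^ 2 * (a ^ 2 + (t - c) ^ 2)) := one_div_le_one_div_of_le h1 h2
      _ = (a ^ 2 * a ^ 2)⁻¹ * (1 / (a ^ 2 + (t - c) ^ 2)) := by
          rw [one_div, one_div, mul_inv]
  · exact (lorentz_integrable a c ha).const_mul _
  · refine Eventually.of_forall fun t => ?_
    exact continuous_const.div (by fun_prop) (fun p => by positivity)

lemma Rfun_continuous (a c : ℝ) (ha : 0 < a) : Continuous (Rfun a c) := by
  unfold Rfun
  exact continuous_const.mul ((by fun_prop : Continuous fun p : ℝ × ℝ =>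
    (12 * a ^ 2 + (4 * a ^ 2 + (c - p.1) ^ 2) + (4 * a ^ 2 + (c - p.2) ^ 2)
      + (4 * a ^ 2 + (p.1 - p.2) ^ 2))).div (by fun_prop) (fun p => by positivity))

lemma dense_compl_pair (x y : ℝ) : Dense ({x, y} : Set ℝ)ᶜ :=
  Set.Countable.dense_compl ℝ ((Set.countable_singleton y).insert x)

lemma main_all (a γ γ' γ'' : ℝ) (ha : 0 < a) :
    ∫ t : ℝ, 1 / ((a ^ 2 + (t - γ) ^ 2) * (a ^ 2 + (t - γ') ^ 2) * (a ^ 2 + (t - γ'') ^ 2)) =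
      π / a * ((12 * a ^ 2 + (4 * a ^ 2 + (γ - γ') ^ 2) + (4 * a ^ 2 + (γ - γ'') ^ 2)
          + (4 * a ^ 2 + (γ' - γ'') ^ 2)) /
        ((4 * a ^ 2 + (γ - γ') ^ 2) * (4 * a ^ 2 + (γ - γ'') ^ 2)
          * (4 * a ^ 2 + (γ' - γ'') ^ 2))) := by
  have stage1 : ∀ y z : ℝ, γ ≠ y → Lfun a γ (y, z) = Rfun a γ (y, z) := by
    intro y z hny
    have hLC : Continuous fun x : ℝ => Lfun a γ (y, x) :=
      (Lfun_continuous a γ ha).comp (by fun_prop)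
    have hRC : Continuous fun x : ℝ => Rfun a γ (y, x) :=
      (Rfun_continuous a γ ha).comp (by fun_prop)
    have heq : Set.EqOn (fun x : ℝ => Lfun a γ (y, x)) (fun x : ℝ => Rfun a γ (y, x))
        ({γ, y} : Set ℝ)ᶜ := by
      intro x hx
      simp only [Set.mem_compl_iff, Set.mem_insert_iff, Set.mem_singleton_iff, not_or] at hx
      exact main_distinct a γ y x ha hny (Ne.symm hx.1) (Ne.symm hx.2)
    have := Continuous.ext_on (dense_compl_pair γ y) hLC hRC heq
    exact congrFun this z
  have stage2 : Lfun a γ (γ', γ'') = Rfun a γ (γ', γ'') := by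
    have hLC : Continuous fun x : ℝ => Lfun a γ (x, γ'') :=
      (Lfun_continuous a γ ha).comp (by fun_prop)
    have hRC : Continuous fun x : ℝ => Rfun a γ (x, γ'') :=
      (Rfun_continuous a γ ha).comp (by fun_prop)
    have heq : Set.EqOn (fun x : ℝ => Lfun a γ (x, γ'')) (fun x : ℝ => Rfun a γ (x, γ''))
        ({γ} : Set ℝ)ᶜ := by
      intro x hx
      simp only [Set.mem_compl_iff, Set.mem_singleton_iff] at hx
      exact stage1 x γ'' (Ne.symm hx)
    have hd : Dense ({γ} : Set ℝ)ᶜ := Set.Countable.dense_compl ℝ (Set.countable_singleton γ)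
    have := Continuous.ext_on hd hLC hRC heq
    exact congrFun this γ'
  exact stage2


theorem integral_three_lorentzians (a γ γ' γ'' : ℝ) (ha : 0 < a)
    (F₁ F₂ : ℝ → ℝ → ℝ → ℝ)
    (hF₁ : ∀ x y z : ℝ, F₁ x y z =
      1 / ((4 * a ^ 2 + (x - y) ^ 2) * (4 * a ^ 2 + (y - z) ^ 2) * (4 * a ^ 2 + (z - x) ^ 2)))
    (hF₂ : ∀ x y z : ℝ, F₂ x y z =
      1 / ((4 * a ^ 2 + (x - y) ^ 2) * (4 * a ^ 2 + (y - z) ^ 2))) :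
    ∫ t : ℝ, 1 / ((a ^ 2 + (t - γ) ^ 2) * (a ^ 2 + (t - γ') ^ 2) * (a ^ 2 + (t - γ'') ^ 2)) =
      12 * π * a * F₁ γ γ' γ''
        + (π / a) * (F₂ γ γ' γ'' + F₂ γ' γ'' γ + F₂ γ'' γ γ') := by
  rw [main_all a γ γ' γ'' ha, hF₁, hF₂, hF₂, hF₂]
  rw [show (4 * a ^ 2 + (γ'' - γ) ^ 2) = (4 * a ^ 2 + (γ - γ'') ^ 2) from by ring]
  have hU12 : (4 * a ^ 2 + (γ - γ') ^ 2) ≠ 0 := by positivity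
  have hU13 : (4 * a ^ 2 + (γ - γ'') ^ 2) ≠ 0 := by positivity
  have hU23 : (4 * a ^ 2 + (γ' - γ'') ^ 2) ≠ 0 := by positivity
  have ha' : a ≠ 0 := ha.ne'
  field_simp
  ring
end

section
/- For any complex number s with Re(s) > 0 and |s| large, the digamma function satisfies Γ'/Γ(s) = log s + O(1/(1 + |Im s|)) uniformly in the region Re(s) ≥ 1, |Im s| ≥ 1. Precisely: there is a constant C such that |Γ'(s)/Γ(s) − log s| ≤ C/(1 + |Im s|) for all s with Re(s) ≥ 1 and |Im s| ≥ 1. -/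
open Complex Filter Topology Set



noncomputable def dterm (n : ℕ) (s : ℂ) : ℂ :=
  Complex.log (s + n + 1) - Complex.log (s + n) - 1 / (s + n)

lemma log_succ {z : ℂ} (hz : 0 < z.re) :
    Complex.log (z + 1) = Complex.log z + Complex.log (1 + 1/z) := by
  have hz0 : z ≠ 0 := by intro h; rw [h] at hz; simp at hz
  have hre : 0 < (1 + 1/z).re := by
    have : (1/z).re = z.re / Complex.normSq z := by
      simp [one_div, Complex.inv_re]
    have h2 : 0 < (1/z).re := by
      rw [this]
      have := Complex.normSq_pos.mpr (by intro h; rw [h] at hz; simp at hz : z ≠ 0)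
      positivity
    simp only [Complex.add_re, Complex.one_re]
    linarith
  have hy0 : (1 + 1/z) ≠ 0 := by
    intro h; rw [h] at hre; simp at hre
  have harg1 : |Complex.arg z| < Real.pi / 2 :=
    Complex.abs_arg_lt_pi_div_two_iff.mpr (Or.inl hz)
  have harg2 : |Complex.arg (1 + 1/z)| < Real.pi / 2 :=
    Complex.abs_arg_lt_pi_div_two_iff.mpr (Or.inl hre)
  have hmul : z * (1 + 1/z) = z + 1 := by field_simp
  rw [← hmul, Complex.log_mul hz0 hy0]
  constructor
  · have := abs_lt.mp harg1; have := abs_lt.mp harg2; linarith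
  · have := abs_lt.mp harg1; have := abs_lt.mp harg2
    have hpi : 0 < Real.pi := Real.pi_pos
    linarith

lemma dterm_bound' {z : ℂ} (hz : 0 < z.re) (habs : 4/3 ≤ ‖z‖) :
    ‖Complex.log (z + 1) - Complex.log z - 1/z‖ ≤ 2 / ‖z‖ ^ 2 := by
  have hz0 : z ≠ 0 := by intro h; rw [h] at hz; simp at hz
  have hzabs : 0 < ‖z‖ := norm_pos_iff.mpr hz0
  have hw : ‖1/z‖ ≤ 3/4 := by
    rw [norm_div, norm_one]
    rw [div_le_iff₀ hzabs]; linarith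
  have hw1 : ‖1/z‖ < 1 := lt_of_le_of_lt hw (by norm_num)
  have key := Complex.norm_log_one_add_sub_self_le hw1
  rw [log_succ hz]
  have : Complex.log z + Complex.log (1 + 1/z) - Complex.log z - 1/z
      = Complex.log (1 + 1/z) - 1/z := by ring
  rw [this]
  refine key.trans ?_
  have h1 : (1 - ‖1/z‖)⁻¹ ≤ 4 := by
    rw [inv_le_comm₀ (by linarith) (by norm_num)]; linarith
  have h2 : ‖1/z‖^2 = 1 / ‖z‖ ^ 2 := by
    rw [norm_div, norm_one, div_pow, one_pow]
  calc ‖1/z‖ ^ 2 * (1 - ‖1/z‖)⁻¹ / 2 ≤ ‖1/z‖^2 * 4 / 2 := by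
        gcongr
    _ = 2 * ‖1/z‖^2 := by ring
    _ = 2 / ‖z‖ ^ 2 := by rw [h2]; ring

lemma tele_hasSum {c : ℝ} (hc : 0 < c) :
    HasSum (fun n : ℕ => 1/(n+c) - 1/(n+1+c)) (1/c) := by
  have hpos : ∀ n : ℕ, (0:ℝ) < n + c := fun n => by positivity
  rw [hasSum_iff_tendsto_nat_of_nonneg]
  · have heq : ∀ n : ℕ, ∑ i ∈ Finset.range n, (1/(i+c) - 1/(i+1+c)) = 1/c - 1/(n+c) := by
      intro n
      have := Finset.sum_range_sub' (fun i : ℕ => 1/((i:ℝ)+c)) n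
      simp only [Nat.cast_add, Nat.cast_one] at this
      rw [show (1:ℝ)/c = 1/((0:ℕ)+c) by norm_num, ← this]
    simp only [heq]
    have h1 : Tendsto (fun n : ℕ => (n:ℝ) + c) atTop atTop :=
      tendsto_atTop_add_const_right _ _ tendsto_natCast_atTop_atTop
    have : Tendsto (fun n : ℕ => 1/((n:ℝ)+c)) atTop (𝓝 0) := by
      simp only [one_div]
      exact Filter.Tendsto.inv_tendsto_atTop h1
    simpa using (tendsto_const_nhds.sub this)
  · intro n
    have h1 : (0:ℝ) < n + c := hpos n
    have h2 : (0:ℝ) < n + 1 + c := by positivity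
    rw [sub_nonneg]
    apply one_div_le_one_div_of_le h1; linarith


lemma dterm_region_bound {s : ℂ} (h1 : 1 ≤ s.re) (h2 : 1 ≤ |s.im|) (n : ℕ) :
    ‖dterm n s‖ ≤ 4 * (1/(n + |s.im|) - 1/(n + 1 + |s.im|)) := by
  set y := |s.im| with hy
  set z := s + n with hzdef
  have hzre : (n:ℝ) + 1 ≤ z.re := by
    simp only [hzdef, Complex.add_re, Complex.natCast_re]
    linarith
  have hzre0 : 0 < z.re := by
    have : (0:ℝ) ≤ (n:ℝ) := Nat.cast_nonneg n
    linarith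
  have him : z.im = s.im := by simp [hzdef]
  have hsq : ((n:ℝ)+1)^2 + y^2 ≤ ‖z‖ ^ 2 := by
    rw [Complex.sq_norm, Complex.normSq_apply, him]
    have : y^2 = s.im^2 := by rw [hy, _root_.sq_abs]
    nlinarith
  have hy1 : (1:ℝ) ≤ y := h2
  have habs0 : (0:ℝ) ≤ ‖z‖ := norm_nonneg _
  have habs43 : 4/3 ≤ ‖z‖ := by
    nlinarith [hsq, sq_nonneg ((n:ℝ)+1)]
  have hb := dterm_bound' hzre0 habs43
  have hdef : dterm n s = Complex.log (z + 1) - Complex.log z - 1/z := by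
    simp [dterm, hzdef]
  rw [hdef]
  refine hb.trans ?_
  have hny : (0:ℝ) < (n:ℝ) + y := by positivity
  have hn1y : (0:ℝ) < (n:ℝ) + 1 + y := by positivity
  have step1 : 2 / ‖z‖ ^ 2 ≤ 2 / (((n:ℝ)+1)^2 + y^2) := by
    apply div_le_div_of_nonneg_left (by norm_num) (by positivity) hsq
  have step2 : 2 / (((n:ℝ)+1)^2 + y^2) ≤ 4 / ((n:ℝ)+1+y)^2 := by
    rw [div_le_div_iff₀ (by positivity) (by positivity)]
    nlinarith [sq_nonneg ((n:ℝ)+1-y)]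
  have step3 : 4 / ((n:ℝ)+1+y)^2 ≤ 4 / (((n:ℝ)+y) * ((n:ℝ)+1+y)) := by
    apply div_le_div_of_nonneg_left (by norm_num) (by positivity)
    nlinarith
  have step4 : 4 / (((n:ℝ)+y) * ((n:ℝ)+1+y)) = 4 * (1/((n:ℝ)+y) - 1/((n:ℝ)+1+y)) := by
    field_simp
    ring
  linarith

lemma dterm_summable_norm {s : ℂ} (h1 : 1 ≤ s.re) (h2 : 1 ≤ |s.im|) :
    Summable (fun n : ℕ => ‖dterm n s‖) := by
  have hy : (0:ℝ) < |s.im| := by linarith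
  apply Summable.of_nonneg_of_le (fun n => norm_nonneg _) (dterm_region_bound h1 h2)
  exact ((tele_hasSum hy).summable.mul_left 4)

lemma region_tsum_bound {s : ℂ} (h1 : 1 ≤ s.re) (h2 : 1 ≤ |s.im|) :
    ‖∑' n : ℕ, dterm n s‖ ≤ 4 / |s.im| := by
  have hy : (0:ℝ) < |s.im| := by linarith
  refine (norm_tsum_le_tsum_norm (dterm_summable_norm h1 h2)).trans ?_
  have := Summable.tsum_le_tsum (dterm_region_bound h1 h2) (dterm_summable_norm h1 h2)
    ((tele_hasSum hy).summable.mul_left 4)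
  refine this.trans ?_
  rw [tsum_mul_left, (tele_hasSum hy).tsum_eq]
  rw [mul_one_div]

lemma log_ratio_tendsto {x : ℝ} (hx : 0 < x) :
  Tendsto (fun N : ℕ => Real.log (x + N) - Real.log N) atTop (𝓝 0) := by
  have h1 : Tendsto (fun N : ℕ => 1 + x / N) atTop (𝓝 1) := by
    have := Filter.Tendsto.inv_tendsto_atTop (tendsto_natCast_atTop_atTop (R := ℝ))
    have h2 : Tendsto (fun N : ℕ => x / (N:ℝ)) atTop (𝓝 0) := by
      simpa using this.const_mul x |>.congr (by intro n; simp [div_eq_mul_inv, mul_comm])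
    simpa using tendsto_const_nhds.add h2
  have h2 : Tendsto (fun N : ℕ => Real.log (1 + x / N)) atTop (𝓝 0) := by
    have := (Real.continuousAt_log (by norm_num : (1:ℝ) ≠ 0)).tendsto.comp h1
    simpa [Function.comp_def] using this
  apply h2.congr'
  filter_upwards [eventually_ge_atTop 1] with N hN1
  have hNpos : (0:ℝ) < N := by exact_mod_cast hN1
  rw [← Real.log_div (by positivity) hNpos.ne']
  congr 1
  field_simp
  ring


lemma real_digamma_limit {x : ℝ} (hx : 1 < x) :
    Tendsto (fun N : ℕ => Real.log N - ∑ n ∈ Finset.range N, 1/(x+n)) atTop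
      (𝓝 (deriv Real.Gamma x / Real.Gamma x)) := by
  set f := Real.log ∘ Real.Gamma with hf
  have hx0 : (0:ℝ) < x := by linarith
  have hGd : ∀ {t : ℝ}, 0 < t → DifferentiableAt ℝ Real.Gamma t := by
    intro t ht
    exact Real.differentiableAt_Gamma (fun m => by
      have : (0:ℝ) ≤ m := Nat.cast_nonneg m
      intro h; rw [h] at ht; linarith)
  have hder : ∀ {t : ℝ}, 0 < t → DifferentiableAt ℝ f t := by
    intro t ht
    exact (hGd ht).log (Real.Gamma_pos_of_pos ht).ne'
  have h_rec : ∀ t : ℝ, 0 < t → f (t + 1) = f t + Real.log t := by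
    intro t ht
    simp only [f, Function.comp_apply, Real.Gamma_add_one ht.ne',
      Real.log_mul ht.ne' (Real.Gamma_pos_of_pos ht).ne', add_comm]
  have hc : ConvexOn ℝ (Ioi 0) f := Real.convexOn_log_Gamma
  -- recurrence for the derivative
  have hder_rec : ∀ t : ℝ, 0 < t → deriv f (t + 1) = deriv f t + 1 / t := by
    intro t ht
    rw [← deriv_comp_add_const, one_div, ← Real.deriv_log,
      ← deriv_add (hder (by positivity)) (Real.differentiableAt_log ht.ne')]
    apply Filter.EventuallyEq.deriv_eq
    filter_upwards [eventually_gt_nhds ht] using h_rec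
  have hN : ∀ N : ℕ, deriv f (x + N) = deriv f x + ∑ n ∈ Finset.range N, 1/(x+n) := by
    intro N
    induction N with
    | zero => simp
    | succ N ih =>
        have : x + (N+1 : ℕ) = (x + N) + 1 := by push_cast; ring
        rw [this, hder_rec (x + N) (by positivity), ih, Finset.sum_range_succ]
        ring
  -- convexity bounds: for t > 1, log (t-1) ≤ deriv f t ≤ log t
  have upper : ∀ t : ℝ, 0 < t → deriv f t ≤ Real.log t := by
    intro t ht
    have h := hc.deriv_le_slope (mem_Ioi.mpr ht) (mem_Ioi.mpr (by linarith : (0:ℝ) < t+1))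
      (by linarith) (hder ht)
    rwa [slope_def_field, h_rec t ht, add_sub_cancel_left, add_sub_cancel_left, div_one] at h
  have lower : ∀ t : ℝ, 1 < t → Real.log (t - 1) ≤ deriv f t := by
    intro t ht
    have h1 : (0:ℝ) < t - 1 := by linarith
    have h := hc.slope_le_deriv (mem_Ioi.mpr h1) (mem_Ioi.mpr (by linarith : (0:ℝ) < t))
      (by linarith) (hder (by linarith))
    have e : t - 1 + 1 = t := by ring
    rw [slope_def_field] at h
    rw [show f t = f (t-1) + Real.log (t-1) by rw [← h_rec (t-1) h1, e]] at h
    have : (f (t - 1) + Real.log (t - 1) - f (t - 1)) / (t - (t - 1)) = Real.log (t-1) := by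
      field_simp
      ring
    rwa [this] at h
  -- squeeze
  have key : ∀ N : ℕ, 1 ≤ N →
      deriv f x - (Real.log (x + N) - Real.log N) ≤
        Real.log N - ∑ n ∈ Finset.range N, 1/(x+n) ∧
      Real.log N - ∑ n ∈ Finset.range N, 1/(x+n) ≤ deriv f x := by
    intro N hN1
    have hNpos : (0:ℝ) < N := by exact_mod_cast hN1
    have hu := upper (x + N) (by positivity)
    have hl := lower (x + N) (by linarith)
    rw [hN N] at hu hl
    constructor
    · linarith
    · have hmono : Real.log N ≤ Real.log (x + N - 1) :=
        Real.log_le_log hNpos (by linarith)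
      linarith
  have hlim0 := log_ratio_tendsto hx0
  have hsq : Tendsto (fun N : ℕ => Real.log N - ∑ n ∈ Finset.range N, 1/(x+n)) atTop
      (𝓝 (deriv f x)) := by
    apply tendsto_of_tendsto_of_tendsto_of_le_of_le'
      (g := fun N : ℕ => deriv f x - (Real.log (x + N) - Real.log N))
      (h := fun _ => deriv f x)
    · simpa using tendsto_const_nhds.sub hlim0
    · exact tendsto_const_nhds
    · filter_upwards [eventually_ge_atTop 1] with N hN1 using (key N hN1).1
    · filter_upwards [eventually_ge_atTop 1] with N hN1 using (key N hN1).2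
  have : deriv f x = deriv Real.Gamma x / Real.Gamma x := by
    rw [hf]
    rw [show Real.log ∘ Real.Gamma = fun t => Real.log (Real.Gamma t) from rfl]
    rw [deriv.log (hGd hx0) (Real.Gamma_pos_of_pos hx0).ne']
  rwa [this] at hsq


lemma deriv_complex_Gamma_ofReal {x : ℝ} (hx : 0 < x) :
    deriv Complex.Gamma (x : ℂ) = ((deriv Real.Gamma x : ℝ) : ℂ) := by
  have hne : ∀ m : ℕ, (x:ℂ) ≠ -m := by
    intro m h
    have : (x:ℝ) = -m := by exact_mod_cast h
    have : (0:ℝ) ≤ m := Nat.cast_nonneg m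
    linarith [this]
  have hd : HasDerivAt Complex.Gamma (deriv Complex.Gamma (x:ℂ)) (x:ℂ) :=
    (Complex.differentiableAt_Gamma _ hne).hasDerivAt
  have hr : HasDerivAt Real.Gamma (deriv Real.Gamma x) x :=
    (Real.differentiableAt_Gamma (fun m => by
      have : (0:ℝ) ≤ m := Nat.cast_nonneg m
      intro h; rw [h] at hx; linarith)).hasDerivAt
  have h1 : Tendsto (slope Complex.Gamma (x:ℂ)) (𝓝[≠] (x:ℂ)) (𝓝 (deriv Complex.Gamma (x:ℂ))) :=
    hasDerivAt_iff_tendsto_slope.mp hd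
  have hmap : Tendsto (fun t : ℝ => (t:ℂ)) (𝓝[≠] x) (𝓝[≠] (x:ℂ)) := by
    rw [tendsto_nhdsWithin_iff]
    constructor
    · exact (Complex.continuous_ofReal.continuousAt).tendsto.mono_left nhdsWithin_le_nhds
    · filter_upwards [self_mem_nhdsWithin] with t ht
      simp only [mem_compl_iff, mem_singleton_iff] at ht ⊢
      exact_mod_cast ht
  have h2 : Tendsto (fun t : ℝ => slope Complex.Gamma (x:ℂ) (t:ℂ)) (𝓝[≠] x)
      (𝓝 (deriv Complex.Gamma (x:ℂ))) := h1.comp hmap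
  have heq : ∀ t : ℝ, slope Complex.Gamma (x:ℂ) (t:ℂ) = ((slope Real.Gamma x t : ℝ) : ℂ) := by
    intro t
    rw [slope_def_field, slope_def_field, Complex.Gamma_ofReal, Complex.Gamma_ofReal]
    push_cast
    ring
  have h3 : Tendsto (fun t : ℝ => ((slope Real.Gamma x t : ℝ) : ℂ)) (𝓝[≠] x)
      (𝓝 ((deriv Real.Gamma x : ℝ) : ℂ)) := by
    have := hasDerivAt_iff_tendsto_slope.mp hr
    exact (Complex.continuous_ofReal.continuousAt.tendsto).comp this
  have := h2.congr (fun t => (heq t))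
  exact tendsto_nhds_unique this h3


-- domain
def Udom : Set ℂ := {s : ℂ | 1/2 < s.re}

lemma Udom_open : IsOpen Udom := isOpen_lt continuous_const Complex.continuous_re

lemma Udom_preconn : IsPreconnected Udom := by
  have : Convex ℝ Udom := convex_halfSpace_re_gt (1/2)
  exact this.isPreconnected

lemma ne_neg_nat {s : ℂ} (hs : 0 < s.re) : ∀ m : ℕ, s ≠ -m := by
  intro m h
  have : s.re = -(m:ℝ) := by rw [h]; simp
  have h2 : (0:ℝ) ≤ m := Nat.cast_nonneg m
  rw [this] at hs; linarith

lemma shifted_props {s : ℂ} (hs : s ∈ Udom) (n : ℕ) :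
    0 < (s + n).re ∧ (s + n) ∈ slitPlane ∧ (s + n + 1) ∈ slitPlane ∧ (s + n) ≠ 0 := by
  have h0 : (0:ℝ) ≤ n := Nat.cast_nonneg n
  have hre : 0 < (s + n).re := by
    simp only [Complex.add_re, Complex.natCast_re]
    have : 1/2 < s.re := hs
    linarith
  have hre1 : 0 < (s + n + 1).re := by
    simp only [Complex.add_re, Complex.natCast_re, Complex.one_re]
    have : 1/2 < s.re := hs
    linarith
  refine ⟨hre, Complex.mem_slitPlane_iff.mpr (Or.inl hre),
    Complex.mem_slitPlane_iff.mpr (Or.inl hre1), ?_⟩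
  intro h; rw [h] at hre; simp at hre

lemma dterm_diffOn (n : ℕ) : DifferentiableOn ℂ (dterm n) Udom := by
  intro s hs
  obtain ⟨hre, hsp, hsp1, hne⟩ := shifted_props hs n
  apply DifferentiableAt.differentiableWithinAt
  unfold dterm
  apply DifferentiableAt.sub
  apply DifferentiableAt.sub
  · exact ((differentiableAt_id.add_const (n:ℂ)).add_const 1).clog hsp1
  · exact (differentiableAt_id.add_const (n:ℂ)).clog hsp
  · exact (differentiableAt_const 1).div (differentiableAt_id.add_const (n:ℂ)) hne

lemma dterm_norm_bound_U {s : ℂ} (hs : s ∈ Udom) (n : ℕ) :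
    ‖dterm (n+1) s‖ ≤ 2 / ((n:ℝ)+1)^2 := by
  obtain ⟨hre, _, _, _⟩ := shifted_props hs (n+1)
  have hrege : ((n:ℝ)+1) ≤ (s + (n+1:ℕ)).re := by
    simp only [Complex.add_re, Complex.natCast_re]
    have : 1/2 < s.re := hs
    push_cast
    linarith
  have habs : ((n:ℝ)+1) ≤ ‖s + (n+1:ℕ)‖ :=
    hrege.trans (Complex.re_le_norm _)
  have habs43 : 4/3 ≤ ‖s + (n+1:ℕ)‖ := by
    have hrege' : (4/3:ℝ) ≤ (s + (n+1:ℕ)).re := by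
      simp only [Complex.add_re, Complex.natCast_re]
      have h1 : 1/2 < s.re := hs
      have h2 : (0:ℝ) ≤ (n:ℝ) := Nat.cast_nonneg n
      push_cast
      linarith
    exact hrege'.trans (Complex.re_le_norm _)
  have hb := dterm_bound' hre habs43
  have heq : dterm (n+1) s = Complex.log ((s + (n+1:ℕ)) + 1) - Complex.log (s + (n+1:ℕ))
      - 1/(s + (n+1:ℕ)) := by unfold dterm; ring_nf
  rw [heq]
  refine hb.trans ?_
  apply div_le_div_of_nonneg_left (by norm_num) (by positivity)
  have h1 : (0:ℝ) ≤ (n:ℝ)+1 := by positivity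
  nlinarith [habs]

lemma Etsum_diffOn : DifferentiableOn ℂ (fun s => ∑' n : ℕ, dterm (n+1) s) Udom := by
  apply differentiableOn_tsum_of_summable_norm
    (u := fun n : ℕ => 2 / ((n:ℝ)+1)^2)
  · apply Summable.mul_left
    have : Summable (fun n : ℕ => 1 / ((n:ℝ)+1)^2) := by
      have := Real.summable_one_div_nat_pow.mpr (le_refl 2)
      rw [← summable_nat_add_iff 1] at this
      simpa [one_div] using this
    simpa [one_div] using this
  · exact fun n => dterm_diffOn (n+1)
  · exact Udom_open
  · exact fun n s hs => dterm_norm_bound_U hs n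

lemma dterm_summable {s : ℂ} (hs : s ∈ Udom) : Summable (fun n : ℕ => dterm n s) := by
  rw [← summable_nat_add_iff 1]
  apply Summable.of_norm
  apply Summable.of_nonneg_of_le (fun n => norm_nonneg _) (fun n => dterm_norm_bound_U hs n)
  apply Summable.mul_left
  have := Real.summable_one_div_nat_pow.mpr (le_refl 2)
  rw [← summable_nat_add_iff 1] at this
  simpa [one_div] using this

lemma telescope_partial (s : ℂ) (N : ℕ) :
    ∑ n ∈ Finset.range N, dterm n s
      = Complex.log (s + N) - Complex.log s - ∑ n ∈ Finset.range N, 1/(s + n) := by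
  have h : ∀ n : ℕ, dterm n s
      = (Complex.log (s + ((n+1:ℕ):ℂ)) - Complex.log (s + n)) - 1/(s + n) := by
    intro n; unfold dterm; push_cast; ring_nf
  rw [Finset.sum_congr rfl (fun n _ => h n), Finset.sum_sub_distrib,
    Finset.sum_range_sub (fun n : ℕ => Complex.log (s + n))]
  simp

lemma real_point_eq {x : ℝ} (hx1 : 1 < x) (hx2 : x < 2) :
    deriv Complex.Gamma (x:ℂ) / Complex.Gamma (x:ℂ)
      = Complex.log (x:ℂ) + ∑' n : ℕ, dterm n (x:ℂ) := by
  have hx0 : (0:ℝ) < x := by linarith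
  have hxU : (x:ℂ) ∈ Udom := by
    simp only [Udom, mem_setOf_eq, Complex.ofReal_re]; linarith
  have hsum := dterm_summable hxU
  have hT : Tendsto (fun N => ∑ n ∈ Finset.range N, dterm n (x:ℂ)) atTop
      (𝓝 (∑' n, dterm n (x:ℂ))) := hsum.hasSum.tendsto_sum_nat
  have hRcast : ∀ N : ℕ, ((Real.log N - ∑ n ∈ Finset.range N, 1/(x+(n:ℝ)) : ℝ) : ℂ)
      = ∑ n ∈ Finset.range N, dterm n (x:ℂ) + Complex.log (x:ℂ)
        - (Complex.log ((x:ℂ) + (N:ℂ)) - Complex.log (N:ℂ)) := by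
    intro N
    rw [telescope_partial]
    have hlogN : Complex.log (N:ℂ) = ((Real.log N : ℝ):ℂ) := by
      rw [← Complex.ofReal_natCast, Complex.ofReal_log (Nat.cast_nonneg N)]
    have hsum2 : (∑ n ∈ Finset.range N, 1/((x:ℂ)+(n:ℂ)))
        = ((∑ n ∈ Finset.range N, 1/(x+(n:ℝ)) : ℝ) : ℂ) := by push_cast; rfl
    rw [hlogN, hsum2]; push_cast; ring
  have hεlim : Tendsto (fun N : ℕ => Complex.log ((x:ℂ) + (N:ℂ)) - Complex.log (N:ℂ)) atTop
      (𝓝 0) := by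
    have heq : ∀ N : ℕ, Complex.log ((x:ℂ) + (N:ℂ)) - Complex.log (N:ℂ)
        = ((Real.log (x + N) - Real.log N : ℝ) : ℂ) := by
      intro N
      have hc : ((x:ℂ) + (N:ℂ)) = ((x + (N:ℝ) : ℝ) : ℂ) := by push_cast; ring
      rw [hc, ← Complex.ofReal_natCast, Complex.ofReal_sub,
        Complex.ofReal_log (by positivity : (0:ℝ) ≤ x + (N:ℝ)),
        Complex.ofReal_log (Nat.cast_nonneg N)]
    have h2 := (Complex.continuous_ofReal.continuousAt.tendsto).comp (log_ratio_tendsto hx0)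
    have h3 : Tendsto (fun N : ℕ => ((Real.log (x + N) - Real.log N : ℝ) : ℂ)) atTop (𝓝 0) := by
      have h0 : (Complex.ofReal 0 : ℂ) = 0 := by simp
      rw [← h0]
      exact h2
    exact h3.congr (fun N => (heq N).symm)
  have hR1 : Tendsto (fun N : ℕ => ((Real.log N - ∑ n ∈ Finset.range N, 1/(x+(n:ℝ)) : ℝ) : ℂ))
      atTop (𝓝 (((deriv Real.Gamma x / Real.Gamma x : ℝ)) : ℂ)) :=
    (Complex.continuous_ofReal.continuousAt.tendsto).comp (real_digamma_limit hx1)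
  have hR2 : Tendsto (fun N : ℕ => ((Real.log N - ∑ n ∈ Finset.range N, 1/(x+(n:ℝ)) : ℝ) : ℂ))
      atTop (𝓝 (∑' n, dterm n (x:ℂ) + Complex.log (x:ℂ) - 0)) := by
    apply Tendsto.congr (fun N => (hRcast N).symm)
    exact (hT.add_const (Complex.log (x:ℂ))).sub hεlim
  have huniq := tendsto_nhds_unique hR1 hR2
  rw [deriv_complex_Gamma_ofReal hx0, Complex.Gamma_ofReal, ← Complex.ofReal_div, huniq]
  ring

lemma psi_eqOn : Set.EqOn (fun s => deriv Complex.Gamma s / Complex.Gamma s)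
    (fun s => Complex.log s + (dterm 0 s + ∑' n : ℕ, dterm (n+1) s)) Udom := by
  have hGdiff : DifferentiableOn ℂ Complex.Gamma Udom := fun s hs =>
    (Complex.differentiableAt_Gamma s (ne_neg_nat (by
      have : 1/2 < s.re := hs; linarith))).differentiableWithinAt
  have hG := hGdiff.analyticOnNhd Udom_open
  have hψ : AnalyticOnNhd ℂ (fun s => deriv Complex.Gamma s / Complex.Gamma s) Udom :=
    hG.deriv.div hG (fun s hs => Complex.Gamma_ne_zero (ne_neg_nat (by
      have : 1/2 < s.re := hs; linarith)))
  have hlog : AnalyticOnNhd ℂ Complex.log Udom := fun s hs =>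
    analyticAt_clog (Complex.mem_slitPlane_iff.mpr (Or.inl (by
      have : 1/2 < s.re := hs; linarith)))
  have hd0 := (dterm_diffOn 0).analyticOnNhd Udom_open
  have hE := Etsum_diffOn.analyticOnNhd Udom_open
  have hg : AnalyticOnNhd ℂ
      (fun s => Complex.log s + (dterm 0 s + ∑' n : ℕ, dterm (n+1) s)) Udom :=
    hlog.add (hd0.add hE)
  have hz₀ : ((3/2 : ℝ) : ℂ) ∈ Udom := by
    simp only [Udom, mem_setOf_eq, Complex.ofReal_re]; norm_num
  have hxk : ∀ k : ℕ, (3/2 + 1/((k:ℝ)+4)) ∈ Ioo (1:ℝ) 2 := by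
    intro k
    have hpos : (0:ℝ) < 1/((k:ℝ)+4) := by positivity
    have h4 : (4:ℝ) ≤ (k:ℝ)+4 := by
      have : (0:ℝ) ≤ (k:ℝ) := Nat.cast_nonneg k
      linarith
    have hle : 1/((k:ℝ)+4) ≤ 1/4 := by
      apply one_div_le_one_div_of_le (by norm_num) h4
    constructor <;> [linarith; linarith]
  have htend : Tendsto (fun k : ℕ => ((3/2 + 1/((k:ℝ)+4) : ℝ) : ℂ)) atTop
      (𝓝[≠] ((3/2:ℝ):ℂ)) := by
    rw [tendsto_nhdsWithin_iff]
    constructor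
    · have h0 : Tendsto (fun k : ℕ => 1/((k:ℝ)+4)) atTop (𝓝 0) := by
        simp only [one_div]
        exact Filter.Tendsto.inv_tendsto_atTop
          (tendsto_atTop_add_const_right _ _ tendsto_natCast_atTop_atTop)
      have h1 : Tendsto (fun k : ℕ => (3/2 + 1/((k:ℝ)+4) : ℝ)) atTop (𝓝 (3/2)) := by
        simpa using tendsto_const_nhds.add h0
      exact (Complex.continuous_ofReal.continuousAt.tendsto).comp h1
    · apply Eventually.of_forall
      intro k
      simp only [mem_compl_iff, mem_singleton_iff]
      intro h
      have hpos : (0:ℝ) < 1/((k:ℝ)+4) := by positivity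
      have heq : (3/2 + 1/((k:ℝ)+4)) = (3/2 : ℝ) := by exact_mod_cast h
      linarith
  have hfreq : ∃ᶠ z in 𝓝[≠] ((3/2:ℝ):ℂ),
      (fun s => deriv Complex.Gamma s / Complex.Gamma s) z
        = (fun s => Complex.log s + (dterm 0 s + ∑' n : ℕ, dterm (n+1) s)) z := by
    apply htend.frequently
    apply Frequently.of_forall
    intro k
    have hx := hxk k
    have hxU : ((3/2 + 1/((k:ℝ)+4) : ℝ) : ℂ) ∈ Udom := by
      simp only [Udom, mem_setOf_eq, Complex.ofReal_re]
      linarith [hx.1]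
    have h1 := real_point_eq hx.1 hx.2
    simp only []
    rw [h1]
    congr 1
    exact Summable.tsum_eq_zero_add (dterm_summable hxU)
  exact hψ.eqOn_of_preconnected_of_frequently_eq hg Udom_preconn hz₀ hfreq

theorem digamma_asymptotic :
    ∃ C : ℝ, ∀ s : ℂ, 1 ≤ s.re → 1 ≤ |s.im| →
      ‖deriv Complex.Gamma s / Complex.Gamma s - Complex.log s‖ ≤
        C / (1 + |s.im|) := by
  refine ⟨8, fun s h1 h2 => ?_⟩
  have hsU : s ∈ Udom := by
    simp only [Udom, mem_setOf_eq]; linarith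
  have heq := psi_eqOn hsU
  simp only [] at heq
  have hsplit : dterm 0 s + ∑' n : ℕ, dterm (n+1) s = ∑' n : ℕ, dterm n s :=
    (Summable.tsum_eq_zero_add (dterm_summable hsU)).symm
  have : deriv Complex.Gamma s / Complex.Gamma s - Complex.log s = ∑' n : ℕ, dterm n s := by
    rw [heq, hsplit]; ring
  rw [this]
  refine (region_tsum_bound h1 h2).trans ?_
  rw [div_le_div_iff₀ (by linarith) (by linarith)]
  nlinarith
end
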